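/- Let X1, X2 be iid St. Petersburg lotteries. Then for every positive integer m, P((X1 + X2)/2 < 2^m) = P(X1 < 2^m) = 1 − 2^{1−m}. -/

import Mathlib

/-! Almost surely each `Xᵢ` is a power `2 ^ k` with `k ≥ 1`, and for powers of two
`(x + y) / 2 < 2 ^ m` holds exactly when `x < 2 ^ m ∧ y ≤ 2 ^ m` or `x = 2 ^ m ∧ y < 2 ^ m`.
With `p = P(X < 2 ^ m) = 1 - 2 ^ (1 - m)` and `q = P(X = 2 ^ m) = 2 ^ (-m)`, independence gives
`P((X₁ + X₂) / 2 < 2 ^ m) = p (p + q) + q p = p (p + 2 q) = p`. -/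

open MeasureTheory ProbabilityTheory Real Finset

noncomputable section

variable {Ω : Type*} [MeasurableSpace Ω]

/-- `X ~ Pareto(α)` : cdf `1 - x^(-α)` for `x ≥ 1`. -/
def IsPareto (P : Measure Ω) (α : ℝ) (X : Ω → ℝ) : Prop :=
  Measurable X ∧ (∀ x : ℝ, 1 ≤ x → P {ω | x < X ω} = ENNReal.ofReal (x ^ (-α))) ∧
    P {ω | X ω < 1} = 0

/-- the increasing rearrangement of a vector -/
def sortedVec {n : ℕ} (f : Fin n → ℝ) : Fin n → ℝ := f ∘ Tuple.sort f

/-- `MajorizedBy θ η` : `θ ⪯ η`, i.e. equal sums and the sum of the `k` smallest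
components of `θ` is at least that of `η` for each `k`. -/
def MajorizedBy {n : ℕ} (θ η : Fin n → ℝ) : Prop :=
  (∑ i, θ i = ∑ i, η i) ∧
  ∀ k : ℕ, k ≤ n →
    ∑ i ∈ Finset.univ.filter (fun i : Fin n => (i : ℕ) < k), sortedVec η i ≤
    ∑ i ∈ Finset.univ.filter (fun i : Fin n => (i : ℕ) < k), sortedVec θ i

/-- St. Petersburg lottery: takes value `2^k` with probability `2^(-k)` for `k ≥ 1`. -/
def IsStPetersburg (P : Measure Ω) (X : Ω → ℝ) : Prop :=
  Measurable X ∧ ∀ k : ℕ, 1 ≤ k → P {ω | X ω = 2 ^ k} = ((2 : ENNReal) ^ k)⁻¹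

open scoped ENNReal

lemma two_pow_add_two_pow_lt_two_pow_succ_iff {a b m : ℕ} :
    2 ^ a + 2 ^ b < 2 ^ (m + 1) ↔ a < m ∧ b ≤ m ∨ a = m ∧ b < m := by
  have hdouble {i j : ℕ} : i < j → 2 * 2 ^ i ≤ 2 ^ j := fun h => by
    rw [← pow_succ']; exact Nat.pow_le_pow_right two_pos h
  have hmono {i j : ℕ} : i < j → 2 ^ i < 2 ^ j := Nat.pow_lt_pow_right one_lt_two
  -- `omega` treats `2 ^ a`, `2 ^ b`, `2 ^ m` as atoms, so it is told how they compare
  have := @hdouble a m; have := @hdouble m a; have := @hdouble b m; have := @hdouble m b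
  have := @hmono a m; have := @hmono b m
  have : 0 < 2 ^ m := by positivity
  have : a = m → 2 ^ a = 2 ^ m := fun h => h ▸ rfl
  have : b = m → 2 ^ b = 2 ^ m := fun h => h ▸ rfl
  rw [pow_succ]
  omega

lemma two_pow_add_two_pow_div_two_lt_two_pow_iff {a b m : ℕ} :
    ((2 : ℝ) ^ a + 2 ^ b) / 2 < 2 ^ m ↔
      (2 : ℝ) ^ a < 2 ^ m ∧ (2 : ℝ) ^ b ≤ 2 ^ m ∨ (2 : ℝ) ^ a = 2 ^ m ∧ (2 : ℝ) ^ b < 2 ^ m := by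
  rw [div_lt_iff₀ two_pos, ← pow_succ]
  simp only [pow_lt_pow_iff_right₀ (one_lt_two (α := ℝ)),
    pow_le_pow_iff_right₀ (one_lt_two (α := ℝ)), pow_right_inj₀ (two_pos (α := ℝ)) (by norm_num)]
  exact_mod_cast two_pow_add_two_pow_lt_two_pow_succ_iff

lemma ENNReal.sum_Ico_inv_two_pow_add_eq_one (m : ℕ) (hm : 1 ≤ m) :
    ∑ k ∈ Ico 1 m, ((2 : ℝ≥0∞) ^ k)⁻¹ + 2 * ((2 : ℝ≥0∞) ^ m)⁻¹ = 1 := by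
  induction m, hm using Nat.le_induction with
  | base => simp [ENNReal.mul_inv_cancel]
  | succ m hm ih =>
    rw [sum_Ico_succ_top hm, ← ih, add_assoc]
    congr 1
    rw [pow_succ, ENNReal.mul_inv (by simp) (by simp), mul_comm, mul_assoc,
      ENNReal.inv_mul_cancel (by simp) (by simp), mul_one, two_mul]

lemma ENNReal.tsum_inv_two_pow_succ : ∑' k : ℕ, ((2 : ℝ≥0∞) ^ (k + 1))⁻¹ = 1 := by
  simp_rw [ENNReal.inv_pow, pow_succ]
  rw [ENNReal.tsum_mul_right, ENNReal.tsum_geometric_two]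
  exact ENNReal.mul_inv_cancel (by simp) (by simp)

lemma ENNReal.ofReal_one_sub_two_rpow_one_sub (m : ℕ) :
    ENNReal.ofReal (1 - (2 : ℝ) ^ ((1 : ℝ) - m)) = 1 - 2 * ((2 : ℝ≥0∞) ^ m)⁻¹ := by
  rw [ENNReal.ofReal_sub _ (by positivity), ENNReal.ofReal_one, Real.rpow_sub two_pos,
    Real.rpow_one, Real.rpow_natCast, div_eq_mul_inv, ENNReal.ofReal_mul two_pos.le,
    ENNReal.ofReal_inv_of_pos (by positivity), ENNReal.ofReal_pow zero_le_two]
  simp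

lemma measure_le_eq_measure_lt_add_measure_eq (P : Measure Ω) {X : Ω → ℝ} (hX : Measurable X)
    (a : ℝ) : P {ω | X ω ≤ a} = P {ω | X ω < a} + P {ω | X ω = a} := by
  rw [← measure_union (Set.disjoint_left.2 fun ω h h' => h.ne h')
    (measurableSet_eq_fun hX measurable_const)]
  simp only [le_iff_lt_or_eq, Set.ofPred_or]

lemma pairwise_disjoint_setOf_eq_two_pow {α : Type*} (X : α → ℝ) :
    Pairwise (Function.onFun Disjoint fun k : ℕ => {x | X x = (2 : ℝ) ^ k}) :=
  (pairwise_disjoint_fiber X).comp_of_injective (pow_right_injective₀ two_pos (by norm_num))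

namespace IsStPetersburg

variable {P : Measure Ω} {X : Ω → ℝ}

lemma ae_exists_eq_two_pow_succ [IsProbabilityMeasure P] (h : IsStPetersburg P X) :
    ∀ᵐ ω ∂P, ∃ k : ℕ, X ω = 2 ^ (k + 1) := by
  have hmeas (k : ℕ) : MeasurableSet {ω | X ω = 2 ^ (k + 1)} :=
    measurableSet_eq_fun h.1 measurable_const
  have hdisj : Pairwise (Function.onFun Disjoint fun k : ℕ => {ω | X ω = 2 ^ (k + 1)}) :=
    (pairwise_disjoint_setOf_eq_two_pow X).comp_of_injective Nat.succ_injective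
  have hunion : {ω | ∃ k : ℕ, X ω = 2 ^ (k + 1)} = ⋃ k : ℕ, {ω | X ω = 2 ^ (k + 1)} :=
    Set.ofPred_exists _
  rw [ae_iff_measure_eq (hunion ▸ (MeasurableSet.iUnion hmeas).nullMeasurableSet), hunion,
    measure_iUnion hdisj hmeas, measure_univ]
  simpa only [h.2 _ (Nat.le_add_left 1 _)] using ENNReal.tsum_inv_two_pow_succ

lemma measure_lt_two_pow_add_eq_one [IsProbabilityMeasure P] (h : IsStPetersburg P X) (m : ℕ)
    (hm : 1 ≤ m) : P {ω | X ω < 2 ^ m} + 2 * ((2 : ℝ≥0∞) ^ m)⁻¹ = 1 := by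
  have hae : {ω | X ω < 2 ^ m} =ᵐ[P] ⋃ k ∈ Ico 1 m, {ω | X ω = 2 ^ k} := by
    refine Filter.eventuallyEq_set.2 ?_
    filter_upwards [h.ae_exists_eq_two_pow_succ] with ω ⟨k, hk⟩
    simp only [Set.mem_ofPred_eq, Set.mem_iUnion, exists_prop, mem_Ico, hk,
      pow_lt_pow_iff_right₀ (one_lt_two (α := ℝ)), pow_right_inj₀ (two_pos (α := ℝ)) (by norm_num),
      exists_eq_right']
    omega
  rw [measure_congr hae, measure_biUnion_finset
      ((pairwise_disjoint_setOf_eq_two_pow X).set_pairwise _)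
      fun k _ => measurableSet_eq_fun h.1 measurable_const,
    sum_congr rfl fun k hk => h.2 k (mem_Ico.1 hk).1]
  exact ENNReal.sum_Ico_inv_two_pow_add_eq_one m hm

lemma measure_lt_two_pow [IsProbabilityMeasure P] (h : IsStPetersburg P X) (m : ℕ)
    (hm : 1 ≤ m) : P {ω | X ω < 2 ^ m} = ENNReal.ofReal (1 - (2 : ℝ) ^ ((1 : ℝ) - m)) := by
  rw [ENNReal.ofReal_one_sub_two_rpow_one_sub]
  exact ENNReal.eq_sub_of_add_eq (ENNReal.mul_ne_top (by simp) (by simp))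
    (h.measure_lt_two_pow_add_eq_one m hm)

end IsStPetersburg

lemma setOf_add_div_two_lt_two_pow_ae_eq {P : Measure Ω} {X₁ X₂ : Ω → ℝ}
    (h₁ : ∀ᵐ ω ∂P, ∃ k : ℕ, X₁ ω = 2 ^ k) (h₂ : ∀ᵐ ω ∂P, ∃ k : ℕ, X₂ ω = 2 ^ k) (m : ℕ) :
    {ω | (X₁ ω + X₂ ω) / 2 < 2 ^ m} =ᵐ[P]
      (X₁ ⁻¹' Set.Iio (2 ^ m) ∩ X₂ ⁻¹' Set.Iic (2 ^ m) ∪ X₁ ⁻¹' {2 ^ m} ∩ X₂ ⁻¹' Set.Iio (2 ^ m) :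
        Set Ω) := by
  refine Filter.eventuallyEq_set.2 ?_
  filter_upwards [h₁, h₂] with ω ⟨a, ha⟩ ⟨b, hb⟩
  simpa only [Set.mem_ofPred_eq, Set.mem_union, Set.mem_inter_iff, Set.mem_preimage, Set.mem_Iio,
    Set.mem_Iic, Set.mem_singleton_iff, ha, hb] using two_pow_add_two_pow_div_two_lt_two_pow_iff

lemma measure_add_div_two_lt_two_pow {P : Measure Ω} {X₁ X₂ : Ω → ℝ} (hX₁ : Measurable X₁)
    (hX₂ : Measurable X₂) (hind : IndepFun X₁ X₂ P) (h₁ : ∀ᵐ ω ∂P, ∃ k : ℕ, X₁ ω = 2 ^ k)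
    (h₂ : ∀ᵐ ω ∂P, ∃ k : ℕ, X₂ ω = 2 ^ k) (m : ℕ) :
    P {ω | (X₁ ω + X₂ ω) / 2 < 2 ^ m} =
      P {ω | X₁ ω < 2 ^ m} * P {ω | X₂ ω ≤ 2 ^ m} +
        P {ω | X₁ ω = 2 ^ m} * P {ω | X₂ ω < 2 ^ m} := by
  rw [measure_congr (setOf_add_div_two_lt_two_pow_ae_eq h₁ h₂ m),
    measure_union (Set.disjoint_left.2 fun ω h h' => h.1.ne h'.1)
      ((hX₁ (measurableSet_singleton _)).inter (hX₂ measurableSet_Iio)),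
    hind.measure_inter_preimage_eq_mul _ _ measurableSet_Iio measurableSet_Iic,
    hind.measure_inter_preimage_eq_mul _ _ (measurableSet_singleton _) measurableSet_Iio]
  rfl

theorem stmt_9 (P : Measure Ω) [IsProbabilityMeasure P]
    (X₁ X₂ : Ω → ℝ) (h₁ : IsStPetersburg P X₁) (h₂ : IsStPetersburg P X₂)
    (hind : IndepFun X₁ X₂ P) :
    ∀ m : ℕ, 1 ≤ m →
      P {ω | (X₁ ω + X₂ ω) / 2 < 2 ^ m} = P {ω | X₁ ω < 2 ^ m} ∧
      P {ω | X₁ ω < 2 ^ m} = ENNReal.ofReal (1 - (2 : ℝ) ^ ((1 : ℝ) - m)) := by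
  intro m hm
  have hp₁ := h₁.measure_lt_two_pow m hm
  refine ⟨?_, hp₁⟩
  have hp₂ : P {ω | X₂ ω < 2 ^ m} = P {ω | X₁ ω < 2 ^ m} :=
    (h₂.measure_lt_two_pow m hm).trans hp₁.symm
  have hae {X : Ω → ℝ} (h : IsStPetersburg P X) : ∀ᵐ ω ∂P, ∃ k : ℕ, X ω = 2 ^ k :=
    h.ae_exists_eq_two_pow_succ.mono fun _ ⟨k, hk⟩ => ⟨k + 1, hk⟩
  rw [measure_add_div_two_lt_two_pow h₁.1 h₂.1 hind (hae h₁) (hae h₂) m,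
    measure_le_eq_measure_lt_add_measure_eq P h₂.1, h₁.2 m hm, h₂.2 m hm, hp₂]
  have hsum := h₁.measure_lt_two_pow_add_eq_one m hm
  set p := P {ω | X₁ ω < 2 ^ m}
  calc p * (p + (2 ^ m)⁻¹) + (2 ^ m)⁻¹ * p = p * (p + 2 * (2 ^ m)⁻¹) := by ring
    _ = p := by rw [hsum, mul_one]
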